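/- With the notation of the extension of a divergence to higher integral forms, the graded Leibniz rule holds: ∇_n(φ·ω) = ∇_{m+n}(φ)·ω + (-1)^{m+n} φ·dω for all φ ∈ I_{m+n+1}A and ω ∈ Ω^m(A). -/

import Mathlib

/-!
Both sides apply the divergence to the same form `φ·(ω ∧ η)`, so the divergence cancels and the
identity is the Leibniz rule `d(ω ∧ η) = dω ∧ η + (-1)^m ω ∧ dη`, pushed through the additive map
`φ`, together with sign bookkeeping.
-/

theorem map_neg_one_pow_mul {F R S : Type*} [Ring R] [Ring S] [FunLike F R S]
    [AddMonoidHomClass F R S] (f : F) (p : ℕ) (x : R) :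
    f ((-1) ^ p * x) = (-1) ^ p * f x := by
  rcases p.even_or_odd with hp | hp <;> simp [hp.neg_one_pow]

theorem neg_one_pow_leibniz_sign {S : Type*} [Ring S] (m n : ℕ) (x y : S) :
    (-1) ^ (m + n + 1) * (y + (-1) ^ m * x) + (-1) ^ (m + n) * y = (-1) ^ (n + 1) * x := by
  rcases neg_one_pow_eq_or S m with hm | hm <;> simp only [pow_succ, pow_add, hm] <;> noncomm_ring

theorem extended_divergence_graded_leibniz_general {k W : Type*} [Field k] [Ring W] [Algebra k W]
    (Ω : ℕ → Submodule k W) (m n : ℕ)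
    (d : W → W)
    (hleibniz : ∀ {p : ℕ} (ω η : W), ω ∈ Ω p →
      d (ω * η) = d ω * η + (-1 : W) ^ p * (ω * d η))
    -- φ ∈ I_{m+n+1}A
    (φ : W → W)
    (hφ_add : ∀ ω η : W, φ (ω + η) = φ ω + φ η)
    -- D is a divergence on I₁A
    (D : (W → W) → W) :
    ∀ ω ∈ Ω m, ∀ η ∈ Ω n,
      -- ∇_n(φ·ω)(η)
      D (fun ξ => φ (ω * (η * ξ))) + (-1 : W) ^ (n + 1) * φ (ω * d η)
        -- (∇_{m+n}(φ)·ω)(η) + (-1)^{m+n} (φ·dω)(η)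
        = (D (fun ξ => φ ((ω * η) * ξ)) + (-1 : W) ^ (m + n + 1) * φ (d (ω * η)))
          + (-1 : W) ^ (m + n) * φ (d ω * η) := by
  intro ω hω η _
  have hφ_leibniz : φ (d (ω * η)) = φ (d ω * η) + (-1) ^ m * φ (ω * d η) := by
    rw [hleibniz ω η hω, hφ_add]
    exact congrArg _ (map_neg_one_pow_mul (AddMonoidHom.mk' φ hφ_add) m _)
  rw [hφ_leibniz, add_assoc, neg_one_pow_leibniz_sign]
  simp only [mul_assoc]

/-- Graded Leibniz rule for the extension of a divergence to higher
integral forms: `∇_n(φ·ω) = ∇_{m+n}(φ)·ω + (-1)^{m+n} φ·dω` for `φ ∈ I_{m+n+1}A` and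
`ω ∈ Ω^m(A)`, evaluated on any `η ∈ Ω^n(A)`. The DGA `Ω(A)` is realized as a grading
`Ω : ℕ → Submodule k W` of an ambient algebra `W` (with `A = Ω⁰`); the extension is
`∇_n(φ)(ω) = ∇(φ·ω) + (-1)^{n+1} φ(dω)` and `(φ·ω)(ω') = φ(ω ∧ ω')`. -/
theorem extended_divergence_graded_leibniz {k W : Type*} [Field k] [Ring W] [Algebra k W]
    (Ω : ℕ → Submodule k W) (m n : ℕ)
    (hone : (1 : W) ∈ Ω 0)
    (hmul : ∀ {p q : ℕ} {ω η : W}, ω ∈ Ω p → η ∈ Ω q → ω * η ∈ Ω (p + q))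
    (d : W → W)
    (hd_add : ∀ ω η : W, d (ω + η) = d ω + d η)
    (hd_deg : ∀ {p : ℕ} {ω : W}, ω ∈ Ω p → d ω ∈ Ω (p + 1))
    (hd_sq : ∀ ω : W, d (d ω) = 0)
    (hleibniz : ∀ {p : ℕ} (ω η : W), ω ∈ Ω p →
      d (ω * η) = d ω * η + (-1 : W) ^ p * (ω * d η))
    -- φ ∈ I_{m+n+1}A
    (φ : W → W)
    (hφ_deg : ∀ ω ∈ Ω (m + n + 1), φ ω ∈ Ω 0)
    (hφ_add : ∀ ω η : W, φ (ω + η) = φ ω + φ η)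
    (hφ_lin : ∀ (ω : W), ∀ a ∈ Ω 0, φ (ω * a) = φ ω * a)
    -- D is a divergence on I₁A
    (D : (W → W) → W)
    (hdiv : ∀ ψ : W → W, (∀ ω η : W, ψ (ω + η) = ψ ω + ψ η) →
      (∀ (ω : W), ∀ a ∈ Ω 0, ψ (ω * a) = ψ ω * a) →
      ∀ a ∈ Ω 0, D (fun ω => ψ (a * ω)) = D ψ * a + ψ (d a)) :
    ∀ ω ∈ Ω m, ∀ η ∈ Ω n,
      -- ∇_n(φ·ω)(η)
      D (fun ξ => φ (ω * (η * ξ))) + (-1 : W) ^ (n + 1) * φ (ω * d η)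
        -- (∇_{m+n}(φ)·ω)(η) + (-1)^{m+n} (φ·dω)(η)
        = (D (fun ξ => φ ((ω * η) * ξ)) + (-1 : W) ^ (m + n + 1) * φ (d (ω * η)))
          + (-1 : W) ^ (m + n) * φ (d ω * η) :=
  extended_divergence_graded_leibniz_general Ω m n d hleibniz φ hφ_add D
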